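/- arXiv:2106.04499 — 3 statements merged into one kernel-verified Lean document; each statement's English description precedes it below -/
import Mathlib

section
/- (Hindsight representation of the Q-function; core identity in the proof of Theorem A.1.) Let r : S → ℝ be a reward function depending only on the entered state, and for s ∈ S, a ∈ A define Q(s,a) := Σ_{k=0}^∞ γ^k · Σ_{s'∈S} Pa_{k+1}(s,a,s')·r(s'); this series converges absolutely. If π(s,a) > 0, then Q(s,a) = Σ_{k=0}^∞ γ^k · Σ_{s'∈S} P_{k+1}(s,s') · (h_{k+1}(a|s,s') / π(s,a)) · r(s'), and this series also converges absolutely. -/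
/-!
Since `P_{n+1}(s,s') = ∑_b π(s,b) Pa_{n+1}(s,b,s')` is a sum of nonnegative terms, `P_n(s,s') = 0`
forces `Pa_n(s,a,s') = 0` whenever `π(s,a) > 0`. Hence `P_n(s,s') · h_n(a|s,s') / π(s,a) = Pa_n(s,a,s')`
also where `h_n` takes its junk value `0`, and the two series agree term by term. Both converge
absolutely because `0 ≤ Pa_n ≤ 1` makes them dominated by `γ^k ∑_{s'} |r(s')|`.
-/

open Finset

noncomputable section
open scoped Classical

/-- n-step state probabilities induced by a policy `π` and a transition kernel `p`:
`Pn 0 s s' = [s' = s]` and `Pn (n+1) s s' = ∑ a, π s a * ∑ s'', p s a s'' * Pn n s'' s'`. -/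
def Pn {S A : Type*} [Fintype S] [Fintype A] (p : S → A → S → ℝ) (π : S → A → ℝ) :
    ℕ → S → S → ℝ
  | 0, s, s' => if s' = s then 1 else 0
  | n + 1, s, s' => ∑ a, π s a * ∑ s'', p s a s'' * Pn p π n s'' s'

/-- Action-conditioned n-step probabilities, defined for indices `n ≥ 1` by
`Pa (n+1) s a s' = ∑ s'', p s a s'' * Pn n s'' s'` (the value at `n = 0` is irrelevant). -/
def Pa {S A : Type*} [Fintype S] [Fintype A] (p : S → A → S → ℝ) (π : S → A → ℝ) :
    ℕ → S → A → S → ℝ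
  | 0, _, _, _ => 0
  | n + 1, s, a, s' => ∑ s'', p s a s'' * Pn p π n s'' s'

/-- Hindsight probability `h_n(a | s, s')`. -/
def hca {S A : Type*} [Fintype S] [Fintype A] (p : S → A → S → ℝ) (π : S → A → ℝ)
    (n : ℕ) (a : A) (s s' : S) : ℝ :=
  if 0 < Pn p π n s s' then π s a * Pa p π n s a s' / Pn p π n s s' else 0

lemma sum_mul_le_one_of_le_one {ι : Type*} (t : Finset ι) {w f : ι → ℝ}
    (hw0 : ∀ i, 0 ≤ w i) (hw1 : ∑ i ∈ t, w i = 1) (hf : ∀ i, f i ≤ 1) :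
    ∑ i ∈ t, w i * f i ≤ 1 :=
  calc ∑ i ∈ t, w i * f i ≤ ∑ i ∈ t, w i * 1 :=
        sum_le_sum fun i _ => mul_le_mul_of_nonneg_left (hf i) (hw0 i)
    _ = 1 := by simp [hw1]

lemma summable_abs_geometric_mul_of_abs_le {γ C : ℝ} (hγ0 : 0 ≤ γ) (hγ1 : γ < 1) {f : ℕ → ℝ}
    (hf : ∀ k, |f k| ≤ C) : Summable fun k => |γ ^ k * f k| := by
  refine ((summable_geometric_of_lt_one hγ0 hγ1).mul_right C).of_nonneg_of_le
    (fun k => abs_nonneg _) fun k => ?_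
  rw [abs_mul, abs_pow, abs_of_nonneg hγ0]
  exact mul_le_mul_of_nonneg_left (hf k) (pow_nonneg hγ0 k)

section

variable {S A : Type*} [Fintype S] [Fintype A] {p : S → A → S → ℝ} {π : S → A → ℝ}

lemma Pn_succ_eq_sum_Pa (n : ℕ) (s s' : S) :
    Pn p π (n + 1) s s' = ∑ a, π s a * Pa p π (n + 1) s a s' := rfl

lemma Pn_nonneg (hp0 : ∀ s a s', 0 ≤ p s a s') (hπ0 : ∀ s a, 0 ≤ π s a) :
    ∀ n s s', 0 ≤ Pn p π n s s'
  | 0, s, s' => by unfold Pn; split_ifs <;> norm_num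
  | n + 1, s, s' => sum_nonneg fun a _ => mul_nonneg (hπ0 s a) <|
      sum_nonneg fun s'' _ => mul_nonneg (hp0 s a s'') (Pn_nonneg hp0 hπ0 n s'' s')

lemma Pn_le_one (hp0 : ∀ s a s', 0 ≤ p s a s') (hp1 : ∀ s a, ∑ s', p s a s' = 1)
    (hπ0 : ∀ s a, 0 ≤ π s a) (hπ1 : ∀ s, ∑ a, π s a = 1) :
    ∀ n s s', Pn p π n s s' ≤ 1
  | 0, s, s' => by unfold Pn; split_ifs <;> norm_num
  | n + 1, s, s' => sum_mul_le_one_of_le_one _ (hπ0 s) (hπ1 s) fun a =>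
      sum_mul_le_one_of_le_one _ (hp0 s a) (hp1 s a) fun s'' =>
        Pn_le_one hp0 hp1 hπ0 hπ1 n s'' s'

lemma Pa_nonneg (hp0 : ∀ s a s', 0 ≤ p s a s') (hπ0 : ∀ s a, 0 ≤ π s a) :
    ∀ n s a s', 0 ≤ Pa p π n s a s'
  | 0, _, _, _ => le_rfl
  | n + 1, s, a, s' => sum_nonneg fun s'' _ =>
      mul_nonneg (hp0 s a s'') (Pn_nonneg hp0 hπ0 n s'' s')

lemma Pa_le_one (hp0 : ∀ s a s', 0 ≤ p s a s') (hp1 : ∀ s a, ∑ s', p s a s' = 1)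
    (hπ0 : ∀ s a, 0 ≤ π s a) (hπ1 : ∀ s, ∑ a, π s a = 1) :
    ∀ n s a s', Pa p π n s a s' ≤ 1
  | 0, _, _, _ => zero_le_one
  | n + 1, s, a, s' => sum_mul_le_one_of_le_one _ (hp0 s a) (hp1 s a) fun s'' =>
      Pn_le_one hp0 hp1 hπ0 hπ1 n s'' s'

lemma abs_sum_Pa_mul_le (hp0 : ∀ s a s', 0 ≤ p s a s') (hp1 : ∀ s a, ∑ s', p s a s' = 1)
    (hπ0 : ∀ s a, 0 ≤ π s a) (hπ1 : ∀ s, ∑ a, π s a = 1) (r : S → ℝ) (n : ℕ) (s : S) (a : A) :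
    |∑ s', Pa p π n s a s' * r s'| ≤ ∑ s', |r s'| := by
  refine (abs_sum_le_sum_abs _ _).trans (sum_le_sum fun s' _ => ?_)
  rw [abs_mul, abs_of_nonneg (Pa_nonneg hp0 hπ0 n s a s')]
  exact mul_le_of_le_one_left (abs_nonneg _) (Pa_le_one hp0 hp1 hπ0 hπ1 n s a s')

lemma Pa_eq_zero_of_Pn_eq_zero (hp0 : ∀ s a s', 0 ≤ p s a s') (hπ0 : ∀ s a, 0 ≤ π s a)
    {n : ℕ} {s s' : S} {a : A} (hπa : 0 < π s a) (hPn : Pn p π n s s' = 0) :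
    Pa p π n s a s' = 0 := by
  cases n with
  | zero => rfl
  | succ n =>
    rw [Pn_succ_eq_sum_Pa, sum_eq_zero_iff_of_nonneg fun b _ =>
      mul_nonneg (hπ0 s b) (Pa_nonneg hp0 hπ0 _ s b s')] at hPn
    exact (mul_eq_zero.mp (hPn a (mem_univ a))).resolve_left hπa.ne'

lemma Pn_mul_hca_div_eq_Pa (hp0 : ∀ s a s', 0 ≤ p s a s') (hπ0 : ∀ s a, 0 ≤ π s a)
    {s : S} {a : A} (hπa : 0 < π s a) (n : ℕ) (s' : S) :
    Pn p π n s s' * (hca p π n a s s' / π s a) = Pa p π n s a s' := by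
  unfold hca
  split_ifs with hpos
  · field_simp
  · have hPn : Pn p π n s s' = 0 := le_antisymm (not_lt.mp hpos) (Pn_nonneg hp0 hπ0 n s s')
    simp [hPn, Pa_eq_zero_of_Pn_eq_zero hp0 hπ0 hπa hPn]

end

theorem hindsight_Q_representation_general
    {S A : Type*} [Fintype S] [Fintype A]
    (p : S → A → S → ℝ) (π : S → A → ℝ)
    (hp0 : ∀ s a s', 0 ≤ p s a s') (hp1 : ∀ s a, ∑ s', p s a s' = 1)
    (hπ0 : ∀ s a, 0 ≤ π s a) (hπ1 : ∀ s, ∑ a, π s a = 1)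
    (γ : ℝ) (hγ0 : 0 ≤ γ) (hγ1 : γ < 1) (r : S → ℝ) (s : S) (a : A) :
    Summable (fun k : ℕ => |γ ^ k * ∑ s', Pa p π (k + 1) s a s' * r s'|) ∧
    (0 < π s a →
      Summable (fun k : ℕ =>
        |γ ^ k * ∑ s', Pn p π (k + 1) s s' * (hca p π (k + 1) a s s' / π s a) * r s'|) ∧
      (∑' k : ℕ, γ ^ k * ∑ s', Pa p π (k + 1) s a s' * r s') =
        ∑' k : ℕ, γ ^ k *
          ∑ s', Pn p π (k + 1) s s' * (hca p π (k + 1) a s s' / π s a) * r s') := by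
  have hQ : Summable fun k : ℕ => |γ ^ k * ∑ s', Pa p π (k + 1) s a s' * r s'| :=
    summable_abs_geometric_mul_of_abs_le hγ0 hγ1 fun k =>
      abs_sum_Pa_mul_le hp0 hp1 hπ0 hπ1 r (k + 1) s a
  refine ⟨hQ, fun hπa => ?_⟩
  simpa only [Pn_mul_hca_div_eq_Pa hp0 hπ0 hπa, and_true] using hQ

/-- hindsight representation of the Q-function.  With rewards depending
only on the entered state, the series defining `Q(s,a)` converges absolutely, and when
`π(s,a) > 0` it equals the hindsight-weighted series, which also converges absolutely. -/
theorem hindsight_Q_representation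
    {S A : Type*} [Fintype S] [Fintype A] [Nonempty S] [Nonempty A]
    (p : S → A → S → ℝ) (π : S → A → ℝ)
    (hp0 : ∀ s a s', 0 ≤ p s a s') (hp1 : ∀ s a, ∑ s', p s a s' = 1)
    (hπ0 : ∀ s a, 0 ≤ π s a) (hπ1 : ∀ s, ∑ a, π s a = 1)
    (γ : ℝ) (hγ0 : 0 ≤ γ) (hγ1 : γ < 1) (r : S → ℝ) (s : S) (a : A) :
    Summable (fun k : ℕ => |γ ^ k * ∑ s', Pa p π (k + 1) s a s' * r s'|) ∧
    (0 < π s a →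
      Summable (fun k : ℕ =>
        |γ ^ k * ∑ s', Pn p π (k + 1) s s' * (hca p π (k + 1) a s s' / π s a) * r s'|) ∧
      (∑' k : ℕ, γ ^ k * ∑ s', Pa p π (k + 1) s a s' * r s') =
        ∑' k : ℕ, γ ^ k *
          ∑ s', Pn p π (k + 1) s s' * (hca p π (k + 1) a s s' / π s a) * r s') :=
  hindsight_Q_representation_general p π hp0 hp1 hπ0 hπ1 γ hγ0 hγ1 r s a

end
end

section
/- (N-step truncated credit, Section 4.1.1.) Fix N ≥ 1, T ≥ N, t ≥ 0, a real γ, a state s_t with sequences of states s : ℕ → S and rewards r : ℕ → ℝ, a value function V : S → ℝ, a sampled action a_t ∈ A, and a policy row q : A → ℝ with q(a) ≥ 0 and Σ_{a∈A} q(a) = 1 (representing π_θ(·|s_t)). Define 𝒜_k := γ·V(s_{k+1}) + r_k − V(s_k), and the credit function C_k(a) := [a = a_t] if k − t < N and C_k(a) := q(a) if k − t ≥ N, and G^C_{t,a} := Σ_{k=t}^{t+T−1} γ^{k−t}·C_k(a)·𝒜_k. Then (i) G^C_{t,a} = [a = a_t]·( Σ_{k=t}^{t+N−1} γ^{k−t}·r_k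 + γ^N·V(s_{t+N}) − V(s_t) ) + q(a)·Σ_{k=t+N}^{t+T−1} γ^{k−t}·𝒜_k, and (ii) for any differentiable family θ ↦ q_θ : A → ℝ with q_θ(a) > 0 and Σ_{a∈A} q_θ(a) = 1 for all θ ∈ ℝ^d, taking q = q_θ one has Σ_{a∈A} ∇_θ log q_θ(a) · G^C_{t,a} = ∇_θ log q_θ(a_t) · ( Σ_{k=t}^{t+N−1} γ^{k−t}·r_k + γ^N·V(s_{t+N}) − V(s_t) ), i.e. the counterfactual term beyond horizon N vanishes and the update reduces to the A2C update with N-step truncated advantages. -/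
/-!
Potential-based shaping telescopes: within the horizon the credit is the indicator of the
sampled action, so the discounted augmented rewards collapse to the `N`-step bootstrapped
advantage. Beyond the horizon the credit is `q a`, and the weighted score
`∑ a, q a • ∇ log q a = ∇ (∑ a, q a)` vanishes because `q` stays normalized.
-/

open Finset

open scoped Classical

section Returns

variable {R : Type*} [CommRing R]

theorem sum_Ico_discounted_telescope (t N : ℕ) (γ : R) (v : ℕ → R) :
    ∑ k ∈ Ico t (t + N), γ ^ (k - t) * (γ * v (k + 1) - v k) = γ ^ N * v (t + N) - v t := by
  rw [sum_Ico_eq_sum_range]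
  simp only [Nat.add_sub_cancel_left]
  have h := sum_range_sub (fun j => γ ^ j * v (t + j)) N
  simp only [pow_zero, one_mul, Nat.add_zero] at h
  rw [← h]
  refine sum_congr rfl fun j _ => ?_
  rw [← add_assoc, pow_succ]
  ring

theorem sum_Ico_discounted_shaped_reward (t N : ℕ) (γ : R) (v r : ℕ → R) :
    ∑ k ∈ Ico t (t + N), γ ^ (k - t) * (γ * v (k + 1) + r k - v k) =
      ∑ k ∈ Ico t (t + N), γ ^ (k - t) * r k + γ ^ N * v (t + N) - v t := by
  rw [add_sub_assoc, ← sum_Ico_discounted_telescope t N γ v, ← sum_add_distrib]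
  exact sum_congr rfl fun k _ => by ring

theorem sum_Ico_truncated_credit {N T : ℕ} (hT : N ≤ T) (t : ℕ) (γ x y : R) (f : ℕ → R) :
    ∑ k ∈ Ico t (t + T), γ ^ (k - t) * (if k - t < N then x else y) * f k =
      x * ∑ k ∈ Ico t (t + N), γ ^ (k - t) * f k +
        y * ∑ k ∈ Ico (t + N) (t + T), γ ^ (k - t) * f k := by
  rw [← sum_Ico_consecutive _ (Nat.le_add_right t N) (Nat.add_le_add_left hT t),
    mul_sum, mul_sum]
  congr 1
  · refine sum_congr rfl fun k hk => ?_
    rw [if_pos (by rw [mem_Ico] at hk; omega)]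
    ring
  · refine sum_congr rfl fun k hk => ?_
    rw [if_neg (by rw [mem_Ico] at hk; omega)]
    ring

theorem sum_Ico_truncated_credit_shaped_reward {N T : ℕ} (hT : N ≤ T) (t : ℕ) (γ x y : R)
    (v r : ℕ → R) :
    ∑ k ∈ Ico t (t + T),
        γ ^ (k - t) * (if k - t < N then x else y) * (γ * v (k + 1) + r k - v k) =
      x * (∑ k ∈ Ico t (t + N), γ ^ (k - t) * r k + γ ^ N * v (t + N) - v t) +
        y * ∑ k ∈ Ico (t + N) (t + T), γ ^ (k - t) * (γ * v (k + 1) + r k - v k) := by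
  rw [sum_Ico_truncated_credit hT, sum_Ico_discounted_shaped_reward]

end Returns

section Score

variable {E A : Type*} [NormedAddCommGroup E] [NormedSpace ℝ E] [Fintype A]
  {q : E → A → ℝ} {θ : E}

theorem sum_smul_fderiv_log_eq_zero
    (hpos : ∀ a, q θ a ≠ 0) (hnorm : ∀ θ', ∑ a, q θ' a = 1)
    (hdiff : ∀ a, DifferentiableAt ℝ (fun θ' => q θ' a) θ) :
    ∑ a, q θ a • fderiv ℝ (fun θ' => Real.log (q θ' a)) θ = 0 := by
  have hscore : ∀ a, q θ a • fderiv ℝ (fun θ' => Real.log (q θ' a)) θ =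
      fderiv ℝ (fun θ' => q θ' a) θ := fun a => by
    rw [((hdiff a).hasFDerivAt.log (hpos a)).fderiv, smul_smul, mul_inv_cancel₀ (hpos a),
      one_smul]
  simp only [hscore]
  rw [← fderiv_fun_sum fun a _ => hdiff a, funext hnorm, fderiv_const_apply]

theorem sum_credit_smul_fderiv_log [DecidableEq A] (a₀ : A) (x y : ℝ)
    (hpos : ∀ a, q θ a ≠ 0) (hnorm : ∀ θ', ∑ a, q θ' a = 1)
    (hdiff : ∀ a, DifferentiableAt ℝ (fun θ' => q θ' a) θ) :
    ∑ a, ((if a = a₀ then 1 else 0) * x + q θ a * y) •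
        fderiv ℝ (fun θ' => Real.log (q θ' a)) θ =
      x • fderiv ℝ (fun θ' => Real.log (q θ' a₀)) θ := by
  simp only [add_smul, sum_add_distrib, ite_mul, one_mul, zero_mul, ite_smul, zero_smul,
    sum_ite_eq', mem_univ, if_true, mul_comm (q θ _) y, ← smul_smul, ← smul_sum,
    sum_smul_fderiv_log_eq_zero hpos hnorm hdiff, smul_zero, add_zero]

end Score

theorem n_step_truncated_credit_general
    {S A : Type*} [Fintype A]
    (N T : ℕ) (hT : N ≤ T) (t : ℕ) (γ : ℝ) (s : ℕ → S) (r : ℕ → ℝ)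
    (V : S → ℝ) (aSampled : A)
    (q : A → ℝ) :
    (∀ a : A,
      (∑ k ∈ Finset.Ico t (t + T),
          γ ^ (k - t) *
            (if k - t < N then (if a = aSampled then (1 : ℝ) else 0) else q a) *
            (γ * V (s (k + 1)) + r k - V (s k))) =
        (if a = aSampled then (1 : ℝ) else 0) *
            ((∑ k ∈ Finset.Ico t (t + N), γ ^ (k - t) * r k) +
              γ ^ N * V (s (t + N)) - V (s t)) +
          q a * ∑ k ∈ Finset.Ico (t + N) (t + T),
              γ ^ (k - t) * (γ * V (s (k + 1)) + r k - V (s k))) ∧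
    (∀ (d : ℕ) (qθ : EuclideanSpace ℝ (Fin d) → A → ℝ),
      (∀ θ a, 0 < qθ θ a) → (∀ θ, ∑ a, qθ θ a = 1) →
      (∀ a, Differentiable ℝ fun θ => qθ θ a) →
      ∀ θ : EuclideanSpace ℝ (Fin d),
        (∑ a, (∑ k ∈ Finset.Ico t (t + T),
            γ ^ (k - t) *
              (if k - t < N then (if a = aSampled then (1 : ℝ) else 0) else qθ θ a) *
              (γ * V (s (k + 1)) + r k - V (s k))) •
          fderiv ℝ (fun θ' => Real.log (qθ θ' a)) θ) =
        ((∑ k ∈ Finset.Ico t (t + N), γ ^ (k - t) * r k) +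
            γ ^ N * V (s (t + N)) - V (s t)) •
          fderiv ℝ (fun θ' => Real.log (qθ θ' aSampled)) θ) := by
  have split (q : A → ℝ) (a : A) :=
    sum_Ico_truncated_credit_shaped_reward hT t γ (if a = aSampled then 1 else 0) (q a)
      (fun k => V (s k)) r
  refine ⟨split q, fun d qθ hpos hnorm hdiff θ => ?_⟩
  simp only [split]
  exact sum_credit_smul_fderiv_log aSampled _ _ (fun a => (hpos θ a).ne') hnorm
    fun a => (hdiff a).differentiableAt

/-- N-step truncated credit.  With the credit function equal to the
indicator `[a = a_t]` within horizon `N` and to the policy row `q` beyond it, (i) the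
credited truncated return of augmented rewards splits into the `N`-step bootstrapped
advantage for the sampled action plus a policy-weighted tail, and (ii) for any positive
differentiable normalized family `q_θ`, the resulting policy update reduces to the A2C
update with `N`-step truncated advantages (the counterfactual tail vanishes). -/
theorem n_step_truncated_credit
    {S A : Type*} [Fintype S] [Fintype A] [Nonempty S] [Nonempty A]
    (N T : ℕ) (hN : 1 ≤ N) (hT : N ≤ T) (t : ℕ) (γ : ℝ) (s : ℕ → S) (r : ℕ → ℝ)
    (V : S → ℝ) (aSampled : A)
    (q : A → ℝ) (hq0 : ∀ a, 0 ≤ q a) (hq1 : ∑ a, q a = 1) :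
    (∀ a : A,
      (∑ k ∈ Finset.Ico t (t + T),
          γ ^ (k - t) *
            (if k - t < N then (if a = aSampled then (1 : ℝ) else 0) else q a) *
            (γ * V (s (k + 1)) + r k - V (s k))) =
        (if a = aSampled then (1 : ℝ) else 0) *
            ((∑ k ∈ Finset.Ico t (t + N), γ ^ (k - t) * r k) +
              γ ^ N * V (s (t + N)) - V (s t)) +
          q a * ∑ k ∈ Finset.Ico (t + N) (t + T),
              γ ^ (k - t) * (γ * V (s (k + 1)) + r k - V (s k))) ∧
    (∀ (d : ℕ) (qθ : EuclideanSpace ℝ (Fin d) → A → ℝ),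
      (∀ θ a, 0 < qθ θ a) → (∀ θ, ∑ a, qθ θ a = 1) →
      (∀ a, Differentiable ℝ fun θ => qθ θ a) →
      ∀ θ : EuclideanSpace ℝ (Fin d),
        (∑ a, (∑ k ∈ Finset.Ico t (t + T),
            γ ^ (k - t) *
              (if k - t < N then (if a = aSampled then (1 : ℝ) else 0) else qθ θ a) *
              (γ * V (s (k + 1)) + r k - V (s k))) •
          fderiv ℝ (fun θ' => Real.log (qθ θ' a)) θ) =
        ((∑ k ∈ Finset.Ico t (t + N), γ ^ (k - t) * r k) +
            γ ^ N * V (s (t + N)) - V (s t)) •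
          fderiv ℝ (fun θ' => Real.log (qθ θ' aSampled)) θ) :=
  n_step_truncated_credit_general N T hT t γ s r V aSampled q
end

section
/- (Degenerate hindsight yields a cross-entropy gradient, Section 3.3.4.) Fix a state s_t ∈ S, rewards r : ℕ → ℝ with Σ_{k=t}^∞ γ^{k−t}·|r_k| < ∞ where 0 ≤ γ < 1, and a future-state-independent credit distribution h̄ : A → ℝ with h̄(a) ≥ 0 and Σ_{a∈A} h̄(a) = 1. Let θ ↦ q_θ : A → ℝ be a differentiable family with q_θ(a) > 0 for all a and θ ∈ ℝ^d (representing π_θ(·|s_t)). Then the HCA policy update for state s_t satisfies Σ_{a∈A} ∇_θ log q_θ(a) · Σ_{k=t}^∞ γ^{k−t}·h̄(a)·r_k = G_t · Σ_{a∈A} h̄(a)·∇_θ log q_θ(a) = −G_t · ∇_θ H(h̄, q_θ), where G_t := Σ_{k=t}^∞ γ^{k−t}·r_k is the discounted return and H(h̄, q_θ) := −Σ_{a∈A} h̄(a)·log q_θ(a) is the cross-entropy of q_θ relative to h̄. In particular, when G_t > 0 the update is a descent direction for the cross-entropy H(h̄, q_θ), and when G_t < 0 it is an ascent direction. -/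
open Finset

/-! Since the credit `h̄(a)` does not depend on the time step, it factors out of the discounted
return, so the update is `G_t` times the `h̄`-weighted score `∑ₐ h̄(a) ∇ log q_θ(a)`; by
linearity of the derivative the latter is `-∇ H(h̄, q_θ)`. -/

theorem tsum_mul_mul_left_comm {ι : Type*} (w x : ι → ℝ) (c : ℝ) :
    ∑' j, w j * (c * x j) = c * ∑' j, w j * x j := by
  simp_rw [mul_left_comm (w _)]
  exact tsum_mul_left

theorem sum_tsum_mul_smul_eq_tsum_smul_sum {ι A E : Type*} [Fintype A] [AddCommMonoid E]
    [Module ℝ E] (w x : ι → ℝ) (c : A → ℝ) (v : A → E) :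
    ∑ a, (∑' j, w j * (c a * x j)) • v a = (∑' j, w j * x j) • ∑ a, c a • v a := by
  simp_rw [tsum_mul_mul_left_comm, mul_comm (c _), mul_smul, ← smul_sum]

theorem fderiv_neg_sum_mul_log {A E : Type*} [Fintype A] [NormedAddCommGroup E]
    [NormedSpace ℝ E] (c : A → ℝ) (q : E → A → ℝ) (θ : E)
    (hq : ∀ a, DifferentiableAt ℝ (fun θ' => q θ' a) θ) (hq0 : ∀ a, q θ a ≠ 0) :
    fderiv ℝ (fun θ' => -∑ a, c a * Real.log (q θ' a)) θ =
      -∑ a, c a • fderiv ℝ (fun θ' => Real.log (q θ' a)) θ := by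
  have hlog : ∀ a, DifferentiableAt ℝ (fun θ' => Real.log (q θ' a)) θ :=
    fun a => (hq a).log (hq0 a)
  rw [fderiv_fun_neg, fderiv_fun_sum fun a _ => (hlog a).const_mul (c a)]
  simp_rw [fderiv_const_mul (hlog _)]

theorem degenerate_hindsight_cross_entropy_gradient_general
    {A : Type*} [Fintype A]
    (γ : ℝ) (t : ℕ) (r : ℕ → ℝ)
    (hb : A → ℝ)
    (d : ℕ) (qθ : EuclideanSpace ℝ (Fin d) → A → ℝ)
    (hqpos : ∀ θ a, 0 < qθ θ a)
    (hqdiff : ∀ a, Differentiable ℝ fun θ => qθ θ a)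
    (θ : EuclideanSpace ℝ (Fin d)) :
    (∑ a, (∑' j : ℕ, γ ^ j * (hb a * r (t + j))) •
        fderiv ℝ (fun θ' => Real.log (qθ θ' a)) θ) =
      (∑' j : ℕ, γ ^ j * r (t + j)) •
        ∑ a, hb a • fderiv ℝ (fun θ' => Real.log (qθ θ' a)) θ ∧
    (∑' j : ℕ, γ ^ j * r (t + j)) •
        ∑ a, hb a • fderiv ℝ (fun θ' => Real.log (qθ θ' a)) θ =
      (-(∑' j : ℕ, γ ^ j * r (t + j))) •
        fderiv ℝ (fun θ' => -∑ a, hb a * Real.log (qθ θ' a)) θ := by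
  refine ⟨sum_tsum_mul_smul_eq_tsum_smul_sum _ _ hb _, ?_⟩
  rw [fderiv_neg_sum_mul_log hb qθ θ (fun a => (hqdiff a).differentiableAt)
    (fun a => (hqpos θ a).ne'), smul_neg, neg_smul, neg_neg]

/-- degenerate hindsight yields a cross-entropy gradient.  If the credit
distribution `h̄` is independent of the future state, the HCA policy update for a state
`s_t` equals `G_t` times the `h̄`-weighted sum of score functions, which is `−G_t` times
the gradient of the cross-entropy `H(h̄, q_θ) = −∑_a h̄(a)·log q_θ(a)`.  Here
`G_t = ∑_{k=t}^∞ γ^{k−t} r_k` (reindexed by `j = k − t`) and absolute convergence of the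
return is assumed. -/
theorem degenerate_hindsight_cross_entropy_gradient
    {S A : Type*} [Fintype S] [Fintype A] [Nonempty S] [Nonempty A]
    (sState : S) (γ : ℝ) (hγ0 : 0 ≤ γ) (hγ1 : γ < 1) (t : ℕ) (r : ℕ → ℝ)
    (hsum : Summable fun j : ℕ => γ ^ j * |r (t + j)|)
    (hb : A → ℝ) (hb0 : ∀ a, 0 ≤ hb a) (hb1 : ∑ a, hb a = 1)
    (d : ℕ) (qθ : EuclideanSpace ℝ (Fin d) → A → ℝ)
    (hqpos : ∀ θ a, 0 < qθ θ a)
    (hqdiff : ∀ a, Differentiable ℝ fun θ => qθ θ a)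
    (θ : EuclideanSpace ℝ (Fin d)) :
    (∑ a, (∑' j : ℕ, γ ^ j * (hb a * r (t + j))) •
        fderiv ℝ (fun θ' => Real.log (qθ θ' a)) θ) =
      (∑' j : ℕ, γ ^ j * r (t + j)) •
        ∑ a, hb a • fderiv ℝ (fun θ' => Real.log (qθ θ' a)) θ ∧
    (∑' j : ℕ, γ ^ j * r (t + j)) •
        ∑ a, hb a • fderiv ℝ (fun θ' => Real.log (qθ θ' a)) θ =
      (-(∑' j : ℕ, γ ^ j * r (t + j))) •
        fderiv ℝ (fun θ' => -∑ a, hb a * Real.log (qθ θ' a)) θ :=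
  degenerate_hindsight_cross_entropy_gradient_general γ t r hb d qθ hqpos hqdiff θ
end
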